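/- (Local Solution Theorem 1) Let z M : ℤ with M ≠ 0, and let S_M := {p : ℝ × ℝ | p.1^2 + z*p.1*p.2 + p.2^2 = M}. Then there exist x y : ℤ with x^2 + z*x*y + y^2 = M if and only if S_M is nonempty and for every α ∈ S_M there exist x y : ℤ with ((x:ℝ), (y:ℝ)) ∈ B_α, where B_α is the subbranch of S_M with respect to α. -/

import Mathlib

/-- The level set `S_M ⊆ ℝ × ℝ` of `x² + zxy + y² = M`. -/
def levelSet (z M : ℤ) : Set (ℝ × ℝ) :=
  {p : ℝ × ℝ | p.1 ^ 2 + (z : ℝ) * p.1 * p.2 + p.2 ^ 2 = (M : ℝ)}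

/-- The oriented area of two plane vectors. -/
def orientedArea (α β : ℝ × ℝ) : ℝ := α.1 * β.2 - α.2 * β.1

/-- Multiplication by the positive imaginary unit `i_z`. -/
def Iplus (z : ℤ) (α : ℝ × ℝ) : ℝ × ℝ := (-α.2, α.1 + (z : ℝ) * α.2)

/-- Multiplication by the negative imaginary unit `-i_z`. -/
def Iminus (z : ℤ) (α : ℝ × ℝ) : ℝ × ℝ := (α.2, -α.1 - (z : ℝ) * α.2)

/-- The subbranch of `S_M` with respect to `α`. -/
def subbranch (z M : ℤ) (α : ℝ × ℝ) : Set (ℝ × ℝ) :=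
  if 0 ≤ z then
    if 0 < M then
      {β ∈ levelSet z M | 0 ≤ orientedArea α β ∧ orientedArea (Iplus z α) β < 0}
    else
      {β ∈ levelSet z M | orientedArea α β ≤ 0 ∧ 0 < orientedArea (Iplus z α) β}
  else
    if 0 < M then
      {β ∈ levelSet z M | orientedArea α β ≤ 0 ∧ 0 < orientedArea (Iminus z α) β}
    else
      {β ∈ levelSet z M | 0 ≤ orientedArea α β ∧ orientedArea (Iminus z α) β < 0}

/-!
Identify `ℝ²` with `ℝ[i_z] = ℝ[X]/(X² - zX + 1)`. Then `x² + zxy + y²` is the norm,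
`⟨α, β⟩ = Im (ᾱβ)` and `⟨I₊α, β⟩ = -⟨I₋α, β⟩ = -Re (ᾱβ)`, so `β ∈ B_α` says that `β ∈ S_M` and
`ᾱβ` lies in a cone fixed by the signs of `z` and `M`. Given an integral `γ ∈ S_M`, the point
`ᾱγ` has norm `M² > 0`, and a norm-one unit `ε` of `ℤ[i_z]` moves it into that cone; then `εγ`
is an integral point of `B_α`.

For `z ≥ 0` the cone is `{Re > 0, Im ≥ 0}`, bounded by `1` and `i_z`. A point of the open fourth
quadrant is either moved into it in at most two steps, or is moved by `i_z` or `ī_z` to a point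
of that quadrant on which `z · Re · (-Im)` is smaller by at least the norm, so the descent stops.
The case `z < 0` is the mirror image under `(x, y) ↦ (x, -y)`.
-/

open QuadraticAlgebra

/-- `ℝ[i_z]` with `i_z = ω`, `ω² = zω - 1`: `Iplus z` is multiplication by `ω`,
`Iminus z` by `-ω`. -/
abbrev Rz (z : ℤ) : Type := QuadraticAlgebra ℝ (-1) (z : ℝ)

namespace Rz

variable {z : ℤ}

theorem norm_eq (w : Rz z) : w.norm = w.re ^ 2 + z * w.re * w.im + w.im ^ 2 := by
  simp only [norm_def]; ring

theorem omega_mul (w : Rz z) : ω * w = ⟨-w.im, w.re + z * w.im⟩ := by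
  ext <;> simp

theorem star_omega_mul (w : Rz z) : star ω * w = ⟨z * w.re + w.im, -w.re⟩ := by
  ext <;> simp

def IsLatticePoint (w : Rz z) : Prop := ∃ a b : ℤ, w = ⟨a, b⟩

theorem IsLatticePoint.mul {v w : Rz z} (hv : IsLatticePoint v) (hw : IsLatticePoint w) :
    IsLatticePoint (v * w) := by
  obtain ⟨a, b, rfl⟩ := hv
  obtain ⟨c, d, rfl⟩ := hw
  exact ⟨a * c - b * d, a * d + b * c + z * b * d, by ext <;> simp; ring⟩

def latticeUnits (z : ℤ) : Submonoid (Rz z) where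
  carrier := {ε | IsLatticePoint ε ∧ ε.norm = 1}
  mul_mem' := fun hv hw => ⟨hv.1.mul hw.1, by rw [map_mul, hv.2, hw.2, one_mul]⟩
  one_mem' := ⟨⟨1, 0, by ext <;> simp⟩, map_one _⟩

theorem neg_mem_latticeUnits {ε : Rz z} (hε : ε ∈ latticeUnits z) : -ε ∈ latticeUnits z := by
  obtain ⟨⟨a, b, rfl⟩, h⟩ := hε
  exact ⟨⟨-a, -b, by ext <;> simp⟩, by rw [QuadraticAlgebra.norm_neg, h]⟩

theorem star_mem_latticeUnits {ε : Rz z} (hε : ε ∈ latticeUnits z) :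
    star ε ∈ latticeUnits z := by
  obtain ⟨⟨a, b, rfl⟩, h⟩ := hε
  exact ⟨⟨a + z * b, -b, by ext <;> simp⟩, by rw [QuadraticAlgebra.norm_star, h]⟩

theorem omega_mem_latticeUnits : ω ∈ latticeUnits z :=
  ⟨⟨0, 1, by ext <;> simp⟩, by simp [norm_def]⟩

def sector (z : ℤ) : Set (Rz z) := {w | 0 < w.re ∧ 0 ≤ w.im}

theorem exists_mul_mem_of_neg {S : Set (Rz z)} {w : Rz z}
    (h : ∃ ε ∈ latticeUnits z, ε * -w ∈ S) : ∃ ε ∈ latticeUnits z, ε * w ∈ S := by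
  obtain ⟨ε, hε, hS⟩ := h
  exact ⟨-ε, neg_mem_latticeUnits hε, by rwa [neg_mul_comm]⟩

theorem exists_mul_mem_sector_of_re_nonneg_of_im_pos {w : Rz z} (hre : 0 ≤ w.re)
    (him : 0 < w.im) : ∃ ε ∈ latticeUnits z, ε * w ∈ sector z := by
  rcases hre.eq_or_lt with hre | hre
  · refine ⟨star ω, star_mem_latticeUnits omega_mem_latticeUnits, ?_⟩
    rw [star_omega_mul, ← hre]
    exact ⟨by simpa using him, by simp⟩
  · exact ⟨1, one_mem _, by simpa [sector] using ⟨hre, him.le⟩⟩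

theorem sq_sub_mul_add_sq_le {x y k : ℝ} (hy : 0 < y) (hyx : y ≤ x) (hx : x < k * y)
    (hpos : 0 < x ^ 2 - k * x * y + y ^ 2) :
    x ^ 2 - k * x * y + y ^ 2 ≤ k * y * (2 * x - k * y) := by
  have h2x : k * y < 2 * x := by
    by_contra! h
    nlinarith [mul_le_mul_of_nonneg_left h (by linarith : (0 : ℝ) ≤ x)]
  nlinarith [mul_pos (sub_pos.2 hx) (sub_pos.2 h2x),
    mul_nonneg (sub_nonneg.2 hyx) (by linarith : (0 : ℝ) ≤ x + y)]

theorem norm_mul_of_mem_latticeUnits {ε : Rz z} (hε : ε ∈ latticeUnits z) (w : Rz z) :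
    (ε * w).norm = w.norm := by
  rw [map_mul, hε.2, one_mul]

theorem exists_mul_mem_sector_or_descend {w : Rz z} (hre : 0 < w.re)
    (him : w.im < 0) (hw : 0 < w.norm) :
    (∃ ε ∈ latticeUnits z, ε * w ∈ sector z) ∨
      ∃ ε ∈ latticeUnits z, 0 < (ε * w).re ∧ (ε * w).im < 0 ∧
        z * (ε * w).re * -(ε * w).im + w.norm ≤ z * w.re * -w.im := by
  have hN := norm_eq w
  by_cases h₁ : 0 ≤ w.re + z * w.im
  · refine .inl ⟨ω, omega_mem_latticeUnits, ?_⟩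
    rw [omega_mul]
    exact ⟨neg_pos.2 him, h₁⟩
  by_cases h₂ : z * w.re + w.im ≤ 0
  · refine .inl (exists_mul_mem_of_neg ?_)
    obtain ⟨ε, hε, hS⟩ := exists_mul_mem_sector_of_re_nonneg_of_im_pos
      (w := star ω * -w) (by simp [star_omega_mul]; linarith) (by simp [star_omega_mul]; linarith)
    exact ⟨ε * star ω, mul_mem hε (star_mem_latticeUnits omega_mem_latticeUnits),
      by rwa [mul_assoc]⟩
  rw [not_le] at h₁ h₂
  refine .inr ?_
  rcases le_or_gt (-w.im) w.re with hs | hs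
  · refine ⟨ω, omega_mem_latticeUnits, ?_⟩
    have key := sq_sub_mul_add_sq_le (neg_pos.2 him) hs (by linarith) (by nlinarith)
    rw [omega_mul, hN]
    exact ⟨neg_pos.2 him, h₁, by dsimp only; nlinarith⟩
  · refine ⟨star ω, star_mem_latticeUnits omega_mem_latticeUnits, ?_⟩
    have key := sq_sub_mul_add_sq_le hre hs.le (by linarith) (by nlinarith)
    rw [star_omega_mul, hN]
    exact ⟨h₂, by simpa using hre, by dsimp only; nlinarith⟩

theorem exists_mul_mem_sector_of_re_pos_of_im_neg (hz : 0 ≤ z) (n : ℕ) {w : Rz z}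
    (hre : 0 < w.re) (him : w.im < 0) (hw : 0 < w.norm)
    (hn : z * w.re * -w.im ≤ n * w.norm) : ∃ ε ∈ latticeUnits z, ε * w ∈ sector z := by
  induction n generalizing w with
  | zero =>
    rcases exists_mul_mem_sector_or_descend hre him hw with h | ⟨ε, -, hre', him', hdrop⟩
    · exact h
    · have : (0 : ℝ) ≤ z * (ε * w).re * -(ε * w).im :=
        mul_nonneg (mul_nonneg (Int.cast_nonneg hz) hre'.le) (neg_nonneg.2 him'.le)
      simp only [Nat.cast_zero, zero_mul] at hn
      linarith
  | succ n ih =>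
    rcases exists_mul_mem_sector_or_descend hre him hw with h | ⟨ε, hε, hre', him', hdrop⟩
    · exact h
    · have hεw := norm_mul_of_mem_latticeUnits hε w
      obtain ⟨η, hη, hS⟩ := ih hre' him' (hεw ▸ hw) (by rw [hεw]; push_cast at hn; linarith)
      exact ⟨η * ε, mul_mem hη hε, by rwa [mul_assoc]⟩

theorem exists_mul_mem_sector_of_re_pos (hz : 0 ≤ z) {w : Rz z} (hre : 0 < w.re)
    (hw : 0 < w.norm) : ∃ ε ∈ latticeUnits z, ε * w ∈ sector z := by
  rcases le_or_gt 0 w.im with him | him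
  · exact ⟨1, one_mem _, by simpa using ⟨hre, him⟩⟩
  · obtain ⟨n, hn⟩ := exists_nat_ge (z * w.re * -w.im / w.norm)
    exact exists_mul_mem_sector_of_re_pos_of_im_neg hz n hre him hw ((div_le_iff₀ hw).1 hn)

theorem exists_mul_mem_sector (hz : 0 ≤ z) {w : Rz z} (hw : 0 < w.norm) :
    ∃ ε ∈ latticeUnits z, ε * w ∈ sector z := by
  rcases lt_trichotomy w.re 0 with hre | hre | hre
  · exact exists_mul_mem_of_neg
      (exists_mul_mem_sector_of_re_pos hz (by simpa using hre) (by rwa [QuadraticAlgebra.norm_neg]))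
  · have him : w.im ≠ 0 := by
      rintro him
      simp [norm_eq, hre, him] at hw
    rcases him.lt_or_gt with him | him
    · exact exists_mul_mem_of_neg
        (exists_mul_mem_sector_of_re_nonneg_of_im_pos (by simp [hre]) (by simpa using him))
    · exact exists_mul_mem_sector_of_re_nonneg_of_im_pos hre.ge him
  · exact exists_mul_mem_sector_of_re_pos hz hre hw

/-- The reflection `(x, y) ↦ (x, -y)` carries `ℝ[i_z]` to `ℝ[i_{-z}]`. -/
theorem exists_mul_re_pos_im_nonpos (hz : z < 0) {w : Rz z} (hw : 0 < w.norm) :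
    ∃ ε ∈ latticeUnits z, 0 < (ε * w).re ∧ (ε * w).im ≤ 0 := by
  have hw' : 0 < (⟨w.re, -w.im⟩ : Rz (-z)).norm := by
    rw [norm_eq] at hw ⊢
    push_cast
    linarith
  obtain ⟨ε, ⟨⟨a, b, rfl⟩, hε⟩, hre, him⟩ := exists_mul_mem_sector (by omega) hw'
  refine ⟨⟨a, -b⟩, ⟨⟨a, -b, by simp⟩, ?_⟩, ?_, ?_⟩
  · rw [norm_eq] at hε ⊢
    push_cast at hε ⊢
    linarith
  · simp only [re_mul] at hre ⊢
    linarith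
  · simp only [im_mul] at him ⊢
    push_cast at him ⊢
    linarith

end Rz

open Rz

theorem mem_levelSet_iff {z M : ℤ} {p : ℝ × ℝ} :
    p ∈ levelSet z M ↔ (⟨p.1, p.2⟩ : Rz z).norm = M := by
  rw [norm_eq]; rfl

theorem intCast_mem_levelSet_iff {z M x y : ℤ} :
    ((x : ℝ), (y : ℝ)) ∈ levelSet z M ↔ x ^ 2 + z * x * y + y ^ 2 = M := by
  simp only [levelSet, Set.mem_ofPred_eq]
  norm_cast

theorem subbranch_subset_levelSet (z M : ℤ) (α : ℝ × ℝ) : subbranch z M α ⊆ levelSet z M := by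
  unfold subbranch
  split_ifs <;> exact Set.sep_subset _ _

theorem orientedArea_eq_im (z : ℤ) (α β : ℝ × ℝ) :
    orientedArea α β = (star (⟨α.1, α.2⟩ : Rz z) * ⟨β.1, β.2⟩).im := by
  simp [orientedArea]; ring

theorem orientedArea_Iplus (z : ℤ) (α β : ℝ × ℝ) :
    orientedArea (Iplus z α) β = -(star (⟨α.1, α.2⟩ : Rz z) * ⟨β.1, β.2⟩).re := by
  simp [orientedArea, Iplus]; ring

theorem orientedArea_Iminus (z : ℤ) (α β : ℝ × ℝ) :
    orientedArea (Iminus z α) β = (star (⟨α.1, α.2⟩ : Rz z) * ⟨β.1, β.2⟩).re := by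
  simp [orientedArea, Iminus]; ring

/-- The conditions defining `subbranch z M α`, read on `star α * β`. -/
def subbranchCone (z M : ℤ) : Set (Rz z) :=
  if 0 ≤ z then
    if 0 < M then {c | 0 < c.re ∧ 0 ≤ c.im} else {c | c.re < 0 ∧ c.im ≤ 0}
  else
    if 0 < M then {c | 0 < c.re ∧ c.im ≤ 0} else {c | c.re < 0 ∧ 0 ≤ c.im}

theorem mem_subbranch_iff {z M : ℤ} {α β : ℝ × ℝ} :
    β ∈ subbranch z M α ↔
      β ∈ levelSet z M ∧ star (⟨α.1, α.2⟩ : Rz z) * ⟨β.1, β.2⟩ ∈ subbranchCone z M := by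
  unfold subbranch subbranchCone
  split_ifs <;>
    simp only [Set.mem_ofPred_eq, orientedArea_Iplus z, orientedArea_Iminus z] <;>
    simp only [orientedArea_eq_im z, neg_neg_iff_pos, neg_pos] <;>
    tauto

theorem exists_mul_mem_subbranchCone {z M : ℤ} {w : Rz z} (hw : 0 < w.norm) :
    ∃ ε ∈ latticeUnits z, ε * w ∈ subbranchCone z M := by
  unfold subbranchCone
  split_ifs with hz hM'
  · exact exists_mul_mem_sector hz hw
  · obtain ⟨ε, hε, hre, him⟩ := exists_mul_mem_sector hz hw
    refine ⟨-ε, neg_mem_latticeUnits hε, ?_⟩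
    simp only [Set.mem_ofPred_eq, neg_mul, re_neg, im_neg]
    constructor <;> linarith
  · exact exists_mul_re_pos_im_nonpos (not_le.1 hz) hw
  · obtain ⟨ε, hε, hre, him⟩ := exists_mul_re_pos_im_nonpos (not_le.1 hz) hw
    refine ⟨-ε, neg_mem_latticeUnits hε, ?_⟩
    simp only [Set.mem_ofPred_eq, neg_mul, re_neg, im_neg]
    constructor <;> linarith

theorem exists_intCast_mem_subbranch {z M x₀ y₀ : ℤ} (hM : M ≠ 0)
    (h₀ : x₀ ^ 2 + z * x₀ * y₀ + y₀ ^ 2 = M) {α : ℝ × ℝ} (hα : α ∈ levelSet z M) :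
    ∃ x y : ℤ, ((x : ℝ), (y : ℝ)) ∈ subbranch z M α := by
  set γ : Rz z := ⟨x₀, y₀⟩
  have hγ : γ.norm = M := mem_levelSet_iff.1 (intCast_mem_levelSet_iff.2 h₀)
  have hc : 0 < (star ⟨α.1, α.2⟩ * γ).norm := by
    rw [map_mul, QuadraticAlgebra.norm_star, mem_levelSet_iff.1 hα, hγ]
    exact mul_self_pos.2 (Int.cast_ne_zero.2 hM)
  obtain ⟨ε, ⟨hεL, hε⟩, hcone⟩ := exists_mul_mem_subbranchCone hc
  obtain ⟨x, y, hxy⟩ := hεL.mul ⟨x₀, y₀, rfl⟩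
  refine ⟨x, y, mem_subbranch_iff.2 ⟨mem_levelSet_iff.2 ?_, ?_⟩⟩
  · rw [← hxy, norm_mul_of_mem_latticeUnits ⟨hεL, hε⟩, hγ]
  · rwa [← hxy, mul_left_comm]

theorem stmt4 (z M : ℤ) (hM : M ≠ 0) :
    (∃ x y : ℤ, x ^ 2 + z * x * y + y ^ 2 = M) ↔
      (levelSet z M).Nonempty ∧
        ∀ α ∈ levelSet z M, ∃ x y : ℤ,
          (((x : ℝ), (y : ℝ)) : ℝ × ℝ) ∈ subbranch z M α := by
  constructor
  · rintro ⟨x₀, y₀, h₀⟩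
    exact ⟨⟨_, intCast_mem_levelSet_iff.2 h₀⟩, fun α hα => exists_intCast_mem_subbranch hM h₀ hα⟩
  · rintro ⟨⟨α, hα⟩, hB⟩
    obtain ⟨x, y, hxy⟩ := hB α hα
    exact ⟨x, y, intCast_mem_levelSet_iff.1 (subbranch_subset_levelSet z M α hxy)⟩
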